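/- arXiv:2211.01499 — 3 statements merged into one kernel-verified Lean document; each statement's English description precedes it below -/
import Mathlib

section
/- Let 𝒴 ⊆ ℂⁿ be a p-dimensional subspace with Ritz values η₁ ≥ ⋯ ≥ η_p of A in 𝒴, and let f : ℝ → ℝ. If η_p > λ_{p+1} and f(λⱼ) ≠ 0 for every j ∈ {1, …, p}, then for every basis matrix Y ∈ ℂ^{n×p} of 𝒴 the matrix f(A)Y has rank p; in particular the subspace 𝒴' = f(A)𝒴 has dimension p. -/
/-- The Rayleigh quotient `ρ(v) = (vᴴAv)/(vᴴv)` of the Hermitian matrix `A`. -/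
noncomputable def rayleigh {n : ℕ} (A : Matrix (Fin n) (Fin n) ℂ)
    (v : EuclideanSpace ℂ (Fin n)) : ℝ :=
  ((inner ℂ v (Matrix.toEuclideanLin A v) : ℂ)).re / ‖v‖ ^ 2

/-- The `i`-th largest Ritz value (1-indexed, `i ∈ {1, …, dim S}`) of the Hermitian
matrix `A` in the subspace `S`, characterized via the Courant–Fischer max-min
principle applied inside `S` (equivalently, the `i`-th largest eigenvalue of
`SᴴAS` for any orthonormal basis matrix `S`). -/
noncomputable def ritzValue {n : ℕ} (A : Matrix (Fin n) (Fin n) ℂ)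
    (S : Submodule ℂ (EuclideanSpace ℂ (Fin n))) (i : ℕ) : ℝ :=
  sSup {r : ℝ | ∃ T : Submodule ℂ (EuclideanSpace ℂ (Fin n)), T ≤ S ∧
    Module.finrank ℂ T = i ∧ ∀ v ∈ T, v ≠ 0 → r ≤ rayleigh A v}

/-- `f(A) = ∑ j, f(λ_j) x_j x_jᴴ` as a linear operator, for eigenvalues `lam`
and orthonormal eigenvectors `x` of `A`. -/
noncomputable def matFun {n : ℕ} (lam : Fin n → ℝ)
    (x : Fin n → EuclideanSpace ℂ (Fin n)) (f : ℝ → ℝ) :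
    EuclideanSpace ℂ (Fin n) →ₗ[ℂ] EuclideanSpace ℂ (Fin n) :=
  ∑ j : Fin n, (f (lam j) : ℂ) • ((innerSL ℂ (x j)).toLinearMap.smulRight (x j))

/-- `y` is a Ritz vector of `A` in `S` associated with the Ritz value `η`:
`y ∈ S`, `y ≠ 0`, `ρ(y) = η` and `Ay − ηy ⊥ S`. -/
def IsRitzVector {n : ℕ} (A : Matrix (Fin n) (Fin n) ℂ)
    (S : Submodule ℂ (EuclideanSpace ℂ (Fin n))) (η : ℝ)
    (y : EuclideanSpace ℂ (Fin n)) : Prop :=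
  y ∈ S ∧ y ≠ 0 ∧ rayleigh A y = η ∧
    ∀ v ∈ S, (inner ℂ v (Matrix.toEuclideanLin A y - (η : ℂ) • y) : ℂ) = 0

/-!
A nonzero vector of `𝒴` annihilated by `f(A)` would be orthogonal to `x₁, …, x_p`, because
`f(λⱼ) ≠ 0` there; expanding it in the remaining eigenvectors bounds its Rayleigh quotient by
`λ_{p+1}`. But every nonzero vector of `𝒴` has Rayleigh quotient at least `η_p > λ_{p+1}`.
So `f(A)` is injective on `𝒴`, which gives both claims.
-/

open RCLike

section Rayleigh

variable {𝕜 E ι : Type*} [RCLike 𝕜] [NormedAddCommGroup E] [InnerProductSpace 𝕜 E]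
  [Fintype ι]

theorem LinearMap.IsSymmetric.re_inner_self_apply_le {T : E →ₗ[𝕜] E} (hT : T.IsSymmetric)
    (b : OrthonormalBasis ι 𝕜 E) {μ : ι → ℝ} (hb : ∀ i, T (b i) = (μ i : 𝕜) • b i)
    {c : ℝ} {v : E} (hv : ∀ i, c < μ i → inner 𝕜 (b i) v = 0) :
    re (inner 𝕜 v (T v)) ≤ c * ‖v‖ ^ 2 := by
  have hcoord : ∀ i, inner 𝕜 (b i) (T v) = μ i * inner 𝕜 (b i) v := fun i => by
    rw [← hT, hb, inner_smul_left, conj_ofReal]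
  have hexpand : re (inner 𝕜 v (T v)) = ∑ i, μ i * ‖inner 𝕜 (b i) v‖ ^ 2 := by
    rw [← b.sum_inner_mul_inner, map_sum]
    refine Finset.sum_congr rfl fun i _ => ?_
    rw [hcoord, ← inner_conj_symm, mul_left_comm, RCLike.conj_mul, ← ofReal_pow, ← ofReal_mul,
      ofReal_re]
  rw [hexpand, ← b.sum_sq_norm_inner_right, Finset.mul_sum]
  refine Finset.sum_le_sum fun i _ => ?_
  rcases le_or_gt (μ i) c with hμ | hμ
  · gcongr
  · simp [hv i hμ]

end Rayleigh

section EuclideanSpace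

variable {n : ℕ}

theorem rayleigh_eq_rayleighQuotient (A : Matrix (Fin n) (Fin n) ℂ)
    (v : EuclideanSpace ℂ (Fin n)) :
    rayleigh A v = (Matrix.toEuclideanLin A).toContinuousLinearMap.rayleighQuotient v := by
  rw [ContinuousLinearMap.rayleighQuotient, ContinuousLinearMap.reApplyInnerSelf_apply,
    ← inner_re_symm]
  rfl

theorem ritzValue_finrank_le_rayleigh (A : Matrix (Fin n) (Fin n) ℂ)
    {Y : Submodule ℂ (EuclideanSpace ℂ (Fin n))} {v : EuclideanSpace ℂ (Fin n)}
    (hvY : v ∈ Y) (hv0 : v ≠ 0) :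
    ritzValue A Y (Module.finrank ℂ Y) ≤ rayleigh A v := by
  set T := (Matrix.toEuclideanLin A).toContinuousLinearMap
  have hbdd : ∀ w, -‖T‖ ≤ rayleigh A w := fun w => by
    rw [rayleigh_eq_rayleighQuotient]
    exact neg_le_of_abs_le (T.rayleighQuotient_le_norm w)
  refine csSup_le ⟨-‖T‖, Y, le_rfl, rfl, fun w _ _ => hbdd w⟩ ?_
  rintro r ⟨S, hSY, hS, hr⟩
  exact hr v (Submodule.eq_of_le_of_finrank_eq hSY hS ▸ hvY) hv0

theorem rayleigh_le_of_inner_eigenvector_eq_zero {A : Matrix (Fin n) (Fin n) ℂ}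
    (hA : A.IsHermitian) {lam : Fin n → ℝ} {x : Fin n → EuclideanSpace ℂ (Fin n)}
    (hx : Orthonormal ℂ x) (heig : ∀ j, Matrix.toEuclideanLin A (x j) = (lam j : ℂ) • x j)
    {c : ℝ} {v : EuclideanSpace ℂ (Fin n)} (hv0 : v ≠ 0)
    (hv : ∀ j, c < lam j → inner ℂ (x j) v = 0) :
    rayleigh A v ≤ c := by
  let b : OrthonormalBasis (Fin n) ℂ (EuclideanSpace ℂ (Fin n)) :=
    .mk hx (hx.linearIndependent.span_eq_top_of_card_eq_finrank' (by simp)).ge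
  have hb : ⇑b = x := OrthonormalBasis.coe_mk hx _
  rw [rayleigh, div_le_iff₀ (by positivity)]
  exact (Matrix.isSymmetric_toEuclideanLin_iff.mpr hA).re_inner_self_apply_le b
    (hb ▸ heig) (hb ▸ hv)

theorem inner_matFun_apply (lam : Fin n → ℝ) {x : Fin n → EuclideanSpace ℂ (Fin n)}
    (hx : Orthonormal ℂ x) (f : ℝ → ℝ) (j : Fin n) (v : EuclideanSpace ℂ (Fin n)) :
    inner ℂ (x j) (matFun lam x f v) = f (lam j) * inner ℂ (x j) v := by
  simp only [matFun, LinearMap.sum_apply, LinearMap.smul_apply, LinearMap.smulRight_apply,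
    ContinuousLinearMap.coe_coe, innerSL_apply_apply, ← mul_smul]
  rw [hx.inner_right_fintype]

theorem inner_eq_zero_of_matFun_apply_eq_zero (lam : Fin n → ℝ)
    {x : Fin n → EuclideanSpace ℂ (Fin n)} (hx : Orthonormal ℂ x) {f : ℝ → ℝ}
    {v : EuclideanSpace ℂ (Fin n)} (hv : matFun lam x f v = 0) {j : Fin n}
    (hj : f (lam j) ≠ 0) :
    inner ℂ (x j) v = 0 := by
  have := inner_matFun_apply lam hx f j v
  rw [hv, inner_zero_right, eq_comm] at this
  exact (mul_eq_zero.mp this).resolve_left (by exact_mod_cast hj)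

end EuclideanSpace

theorem stmt0_general {n p : ℕ} (hpn : p < n)
    (A : Matrix (Fin n) (Fin n) ℂ) (hA : A.IsHermitian)
    (lam : Fin n → ℝ) (hlam : Antitone lam)
    (x : Fin n → EuclideanSpace ℂ (Fin n)) (hx : Orthonormal ℂ x)
    (heig : ∀ j, Matrix.toEuclideanLin A (x j) = (lam j : ℂ) • x j)
    (Y : Submodule ℂ (EuclideanSpace ℂ (Fin n))) (hY : Module.finrank ℂ Y = p)
    (f : ℝ → ℝ)
    (hηp : lam ⟨p, hpn⟩ < ritzValue A Y p)
    (hf : ∀ j : Fin n, (j : ℕ) < p → f (lam j) ≠ 0) :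
    (∀ B : Fin p → EuclideanSpace ℂ (Fin n), LinearIndependent ℂ B →
      (∀ i, B i ∈ Y) → LinearIndependent ℂ (fun i => matFun lam x f (B i))) ∧
    Module.finrank ℂ (Y.map (matFun lam x f)) = p := by
  have hdisj : Disjoint Y (LinearMap.ker (matFun lam x f)) := by
    refine Submodule.disjoint_def.mpr fun v hvY hvker => by_contra fun hv0 => hηp.not_ge ?_
    have hperp : ∀ j, lam ⟨p, hpn⟩ < lam j → inner ℂ (x j) v = 0 := fun j hj =>
      inner_eq_zero_of_matFun_apply_eq_zero lam hx hvker (hf j (hlam.reflect_lt hj))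
    calc ritzValue A Y p ≤ rayleigh A v := hY ▸ ritzValue_finrank_le_rayleigh A hvY hv0
      _ ≤ lam ⟨p, hpn⟩ := rayleigh_le_of_inner_eigenvector_eq_zero hA hx heig hv0 hperp
  refine ⟨fun B hB hBY => hB.map (hdisj.mono_left ?_), ?_⟩
  · exact Submodule.span_le.mpr (Set.range_subset_iff.mpr hBY)
  · rw [← LinearMap.range_domRestrict,
      LinearMap.finrank_range_of_inj (LinearMap.injective_domRestrict_iff.mpr hdisj), hY]

/-- If the smallest Ritz value `η_p` of `A` in the `p`-dimensional
subspace `𝒴` satisfies `η_p > λ_{p+1}` and `f(λ_j) ≠ 0` for `j ∈ {1,…,p}`, then for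
every basis matrix `Y` of `𝒴` the matrix `f(A)Y` has rank `p`; in particular
`𝒴' = f(A)𝒴` has dimension `p`.  (Eigenvalues are 0-indexed: `lam ⟨j⟩` is `λ_{j+1}`.) -/
theorem stmt0 {n p : ℕ} (hp : 0 < p) (hpn : p < n)
    (A : Matrix (Fin n) (Fin n) ℂ) (hA : A.IsHermitian)
    (lam : Fin n → ℝ) (hlam : Antitone lam)
    (x : Fin n → EuclideanSpace ℂ (Fin n)) (hx : Orthonormal ℂ x)
    (heig : ∀ j, Matrix.toEuclideanLin A (x j) = (lam j : ℂ) • x j)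
    (Y : Submodule ℂ (EuclideanSpace ℂ (Fin n))) (hY : Module.finrank ℂ Y = p)
    (f : ℝ → ℝ)
    (hηp : lam ⟨p, hpn⟩ < ritzValue A Y p)
    (hf : ∀ j : Fin n, (j : ℕ) < p → f (lam j) ≠ 0) :
    (∀ B : Fin p → EuclideanSpace ℂ (Fin n), LinearIndependent ℂ B →
      (∀ i, B i ∈ Y) → LinearIndependent ℂ (fun i => matFun lam x f (B i))) ∧
    Module.finrank ℂ (Y.map (matFun lam x f)) = p :=
  stmt0_general hpn A hA lam hlam x hx heig Y hY f hηp hf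
end

section
/- Let u, v ∈ ℂⁿ be nonzero vectors and let l ∈ {1, …, n−1} satisfy λ_l ≥ ρ(u) ≥ λ_{l+1}. If |xⱼᴴv| ≥ |xⱼᴴu| for every j ∈ {1, …, l} and |xⱼᴴv| ≤ |xⱼᴴu| for every j ∈ {l+1, …, n}, then ρ(v) ≥ ρ(u). -/
/-!
Expanding in the eigenbasis, `vᴴAv - ρ‖v‖² = ∑ⱼ (λⱼ - ρ) |xⱼᴴv|²` for every `v`. Take `ρ = ρ(u)`,
so that the sum vanishes for `u`. The coefficient `λⱼ - ρ(u)` is `≥ 0` for `j ≤ l` and `≤ 0` for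
`j > l`, so the hypotheses make every term for `v` at least the corresponding term for `u`, hence
`vᴴAv - ρ(u)‖v‖² ≥ 0`.
-/

open scoped InnerProductSpace

section EigenExpansion

variable {𝕜 E ι : Type*} [RCLike 𝕜] [NormedAddCommGroup E] [InnerProductSpace 𝕜 E] [Fintype ι]

theorem OrthonormalBasis.re_inner_apply_self_eq_sum (b : OrthonormalBasis ι 𝕜 E)
    {T : E →ₗ[𝕜] E} {lam : ι → ℝ} (hT : ∀ j, T (b j) = (lam j : 𝕜) • b j) (w : E) :
    RCLike.re ⟪w, T w⟫_𝕜 = ∑ j, lam j * ‖⟪b j, w⟫_𝕜‖ ^ 2 := by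
  have hTw : T w = ∑ j, (⟪b j, w⟫_𝕜 * lam j) • b j := by
    conv_lhs => rw [← b.sum_repr' w]
    simp only [map_sum, map_smul, hT, smul_smul]
  rw [hTw, inner_sum, map_sum]
  refine Finset.sum_congr rfl fun j _ => ?_
  rw [inner_smul_right, ← inner_conj_symm w (b j), mul_comm, ← mul_assoc, RCLike.conj_mul,
    ← RCLike.ofReal_pow, ← RCLike.ofReal_mul, RCLike.ofReal_re, mul_comm]

theorem OrthonormalBasis.re_inner_apply_self_sub_mul_norm_sq (b : OrthonormalBasis ι 𝕜 E)
    {T : E →ₗ[𝕜] E} {lam : ι → ℝ} (hT : ∀ j, T (b j) = (lam j : 𝕜) • b j) (ρ : ℝ) (w : E) :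
    RCLike.re ⟪w, T w⟫_𝕜 - ρ * ‖w‖ ^ 2 = ∑ j, (lam j - ρ) * ‖⟪b j, w⟫_𝕜‖ ^ 2 := by
  simp only [b.re_inner_apply_self_eq_sum hT, ← b.sum_sq_norm_inner_right w, Finset.mul_sum,
    ← Finset.sum_sub_distrib, sub_mul]

end EigenExpansion

section Rayleigh

variable {n : ℕ} (A : Matrix (Fin n) (Fin n) ℂ)

theorem rayleigh_mul_norm_sq (v : EuclideanSpace ℂ (Fin n)) :
    rayleigh A v * ‖v‖ ^ 2 = (⟪v, Matrix.toEuclideanLin A v⟫_ℂ).re := by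
  rcases eq_or_ne v 0 with rfl | hv
  · simp
  · exact div_mul_cancel₀ _ (by positivity)

theorem le_rayleigh_iff {v : EuclideanSpace ℂ (Fin n)} (hv : v ≠ 0) (ρ : ℝ) :
    ρ ≤ rayleigh A v ↔ ρ * ‖v‖ ^ 2 ≤ (⟪v, Matrix.toEuclideanLin A v⟫_ℂ).re :=
  le_div_iff₀ (by positivity)

end Rayleigh

/-- If `λ_l ≥ ρ(u) ≥ λ_{l+1}` and the eigenvector components of `v`
dominate those of `u` for `j ≤ l` while being dominated for `j > l`, then
`ρ(v) ≥ ρ(u)`.  (0-indexed: `lam ⟨j⟩` is `λ_{j+1}`.) -/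
theorem stmt2 {n : ℕ}
    (A : Matrix (Fin n) (Fin n) ℂ)
    (lam : Fin n → ℝ) (hlam : Antitone lam)
    (x : Fin n → EuclideanSpace ℂ (Fin n)) (hx : Orthonormal ℂ x)
    (heig : ∀ j, Matrix.toEuclideanLin A (x j) = (lam j : ℂ) • x j)
    (u v : EuclideanSpace ℂ (Fin n)) (hv : v ≠ 0)
    (l : ℕ) (hln : l < n)
    (hup : rayleigh A u ≤ lam ⟨l - 1, by omega⟩)
    (hlo : lam ⟨l, hln⟩ ≤ rayleigh A u)
    (h1 : ∀ j : Fin n, (j : ℕ) < l → ‖(inner ℂ (x j) u : ℂ)‖ ≤ ‖(inner ℂ (x j) v : ℂ)‖)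
    (h2 : ∀ j : Fin n, l ≤ (j : ℕ) → ‖(inner ℂ (x j) v : ℂ)‖ ≤ ‖(inner ℂ (x j) u : ℂ)‖) :
    rayleigh A u ≤ rayleigh A v := by
  let b : OrthonormalBasis (Fin n) ℂ (EuclideanSpace ℂ (Fin n)) :=
    .mk hx (hx.linearIndependent.span_eq_top_of_card_eq_finrank' (by simp)).ge
  have hb : ⇑b = x := OrthonormalBasis.coe_mk hx _
  have hexp := b.re_inner_apply_self_sub_mul_norm_sq (T := Matrix.toEuclideanLin A)
    (hb ▸ heig) (rayleigh A u)
  simp only [hb, RCLike.re_to_complex] at hexp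
  have hdom : ∀ j, (lam j - rayleigh A u) * ‖⟪x j, u⟫_ℂ‖ ^ 2
      ≤ (lam j - rayleigh A u) * ‖⟪x j, v⟫_ℂ‖ ^ 2 := by
    intro j
    rcases lt_or_ge (j : ℕ) l with hj | hj
    · have : rayleigh A u ≤ lam j := hup.trans (hlam (Fin.mk_le_mk.mpr (by omega)))
      exact mul_le_mul_of_nonneg_left (pow_le_pow_left₀ (norm_nonneg _) (h1 j hj) 2)
        (sub_nonneg.mpr this)
    · have : lam j ≤ rayleigh A u := (hlam (Fin.mk_le_mk.mpr hj)).trans hlo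
      exact mul_le_mul_of_nonpos_left (pow_le_pow_left₀ (norm_nonneg _) (h2 j hj) 2)
        (sub_nonpos.mpr this)
  have hu0 : ∑ j, (lam j - rayleigh A u) * ‖⟪x j, u⟫_ℂ‖ ^ 2 = 0 := by
    rw [← hexp u, ← rayleigh_mul_norm_sq, sub_self]
  rw [le_rayleigh_iff A hv, ← sub_nonneg, hexp v, ← hu0]
  exact Finset.sum_le_sum fun j _ => hdom j
end

section
/- Let 𝒴 ⊆ ℂⁿ be a p-dimensional subspace with Ritz values η₁ ≥ ⋯ ≥ η_p of A in 𝒴, assume η_p > λ_{p+1}, and let f : ℝ → ℝ satisfy |f(λ₁)| ≥ ⋯ ≥ |f(λ_p)| > max_{j ∈ {p+1, …, n}} |f(λⱼ)|. Then 𝒴' = f(A)𝒴 has dimension p, and its smallest (p-th largest) Ritz value η'_p satisfies (λ_p − η'_p)/(η'_p − λ_{p+1}) ≤ ((max_{j ∈ {p+1, …, n}} |f(λⱼ)|)² / |f(λ_p)|²) · (λ_p − η_p)/(η_p − λ_{p+1}); in particular η'_p > λ_{p+1}. -/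
/-!
In the eigenbasis, `ρ(v) = ∑ λⱼ wⱼ / ∑ wⱼ` with weights `wⱼ = |⟨xⱼ, v⟩|²`, and `f(A)` multiplies
`wⱼ` by `f(λⱼ)²`. For `μ = λ_p`, `ν' = λ_{p+1}` the inequality `(μ - ρ)/(ρ - ν') ≤ K` is linear in
the weights: `∑ (λⱼ - μ) wⱼ + K ∑ (λⱼ - ν') wⱼ ≥ 0`. Since `η_p ≤ ρ` on `𝒴`, it holds there with
`K = (λ_p - η_p)/(η_p - λ_{p+1})`, and reweighting by `f(λⱼ)²` (at least `|f(λ_p)|²` above the gap,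
at most `ν_p²` below it) preserves it with `K` scaled by `ν_p²/|f(λ_p)|²`, term by term. As the
smallest Ritz value of `f(A)𝒴` is the infimum of `ρ` over `f(A)𝒴`, the bound passes to `η'_p`.
-/

open Module Matrix

section RitzValue

variable {n : ℕ}

theorem abs_rayleigh_le (A : Matrix (Fin n) (Fin n) ℂ) (v : EuclideanSpace ℂ (Fin n)) :
    |rayleigh A v| ≤ ‖toEuclideanCLM (n := Fin n) (𝕜 := ℂ) A‖ := by
  rcases eq_or_ne v 0 with rfl | hv
  · simp [rayleigh]
  rw [rayleigh, abs_div, abs_of_nonneg (sq_nonneg ‖v‖), div_le_iff₀ (by positivity)]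
  calc |(inner ℂ v (toEuclideanLin A v)).re| ≤ ‖inner ℂ v (toEuclideanLin A v)‖ :=
        Complex.abs_re_le_norm _
    _ ≤ ‖v‖ * ‖toEuclideanCLM (n := Fin n) (𝕜 := ℂ) A v‖ := norm_inner_le_norm _ _
    _ ≤ ‖v‖ * (‖toEuclideanCLM (n := Fin n) (𝕜 := ℂ) A‖ * ‖v‖) := by
        gcongr; exact ContinuousLinearMap.le_opNorm _ _
    _ = _ := by ring

variable {A : Matrix (Fin n) (Fin n) ℂ} {S : Submodule ℂ (EuclideanSpace ℂ (Fin n))} {i : ℕ}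

-- For `i = finrank S` the only competitor in the max-min defining `ritzValue` is `S` itself.

theorem ritzValue_le_rayleigh (hS : finrank ℂ S = i) {v : EuclideanSpace ℂ (Fin n)}
    (hv : v ∈ S) (hv0 : v ≠ 0) : ritzValue A S i ≤ rayleigh A v := by
  refine csSup_le ⟨_, S, le_rfl, hS, fun w _ _ => neg_le_of_abs_le (abs_rayleigh_le A w)⟩ ?_
  rintro r ⟨T, hTS, hT, h⟩
  exact h v (Submodule.eq_of_le_of_finrank_eq hTS (hT.trans hS.symm) ▸ hv) hv0

theorem le_ritzValue (hi : 0 < i) (hS : finrank ℂ S = i) {r : ℝ}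
    (h : ∀ v ∈ S, v ≠ 0 → r ≤ rayleigh A v) : r ≤ ritzValue A S i := by
  refine le_csSup ⟨‖toEuclideanCLM (n := Fin n) (𝕜 := ℂ) A‖, ?_⟩ ⟨S, le_rfl, hS, h⟩
  rintro r' ⟨T, -, hT, hr'⟩
  obtain ⟨v, hvT, hv0⟩ := Submodule.exists_mem_ne_zero_of_ne_bot (p := T)
    (by rintro rfl; simp at hT; omega)
  exact (hr' v hvT hv0).trans (le_of_abs_le (abs_rayleigh_le A v))

end RitzValue

section Eigenbasis

variable {𝕜 E ι : Type*} [RCLike 𝕜] [NormedAddCommGroup E] [InnerProductSpace 𝕜 E] [Fintype ι]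

theorem OrthonormalBasis.repr_apply_of_apply_eq_smul (b : OrthonormalBasis ι 𝕜 E)
    {T : E →ₗ[𝕜] E} {c : ι → 𝕜} (hT : ∀ j, T (b j) = c j • b j) (v : E) (j : ι) :
    b.repr (T v) j = c j * b.repr v j := by
  classical
  have : (EuclideanSpace.proj j).toLinearMap ∘ₗ b.repr.toLinearMap ∘ₗ T =
      c j • ((EuclideanSpace.proj j).toLinearMap ∘ₗ b.repr.toLinearMap) :=
    b.toBasis.ext fun i => by
      by_cases hij : i = j
      · subst hij; simp [hT]
      · simp [hT, Ne.symm hij]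
  exact LinearMap.congr_fun this v

theorem OrthonormalBasis.exists_mem_ne_zero_repr_eq_zero [FiniteDimensional 𝕜 E]
    (b : OrthonormalBasis ι 𝕜 E) {S : Submodule 𝕜 E} {s : Finset ι} (hs : s.card < finrank 𝕜 S) :
    ∃ v ∈ S, v ≠ 0 ∧ ∀ j ∈ s, b.repr v j = 0 := by
  let ℓ : E →ₗ[𝕜] (s → 𝕜) :=
    LinearMap.pi fun j => (EuclideanSpace.proj (j : ι)).toLinearMap ∘ₗ b.repr.toLinearMap
  obtain ⟨⟨v, hvS⟩, hv, hv0⟩ := Submodule.exists_mem_ne_zero_of_ne_bot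
    (LinearMap.ker_ne_bot_of_finrank_lt (f := ℓ ∘ₗ S.subtype) (by simpa using hs))
  refine ⟨v, hvS, by simpa using hv0, fun j hj => ?_⟩
  simpa [ℓ] using congr_fun (LinearMap.mem_ker.1 hv) ⟨j, hj⟩

end Eigenbasis

section Spectral

variable {n : ℕ} {ι : Type*} [Fintype ι] {A : Matrix (Fin n) (Fin n) ℂ} {lam : ι → ℝ}
  {b : OrthonormalBasis ι ℂ (EuclideanSpace ℂ (Fin n))}

theorem re_inner_toEuclideanLin_self (heig : ∀ j, toEuclideanLin A (b j) = (lam j : ℂ) • b j)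
    (v : EuclideanSpace ℂ (Fin n)) :
    (inner ℂ v (toEuclideanLin A v)).re = ∑ j, lam j * ‖b.repr v j‖ ^ 2 := by
  rw [← b.repr.inner_map_map, PiLp.inner_apply, Complex.re_sum]
  refine Finset.sum_congr rfl fun j _ => ?_
  rw [b.repr_apply_of_apply_eq_smul heig, RCLike.inner_apply, mul_assoc, RCLike.mul_conj,
    Complex.re_ofReal_mul]
  norm_cast

theorem sum_sub_mul_norm_repr_sq (heig : ∀ j, toEuclideanLin A (b j) = (lam j : ℂ) • b j)
    (v : EuclideanSpace ℂ (Fin n)) (t : ℝ) :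
    ∑ j, (lam j - t) * ‖b.repr v j‖ ^ 2 = ‖v‖ ^ 2 * (rayleigh A v - t) := by
  rcases eq_or_ne v 0 with rfl | hv
  · simp
  have hnorm : ∑ j, ‖b.repr v j‖ ^ 2 = ‖v‖ ^ 2 := by
    simpa [b.repr_apply_apply] using b.sum_sq_norm_inner_right v
  rw [rayleigh, re_inner_toEuclideanLin_self heig, mul_sub, mul_div_cancel₀ _ (by positivity),
    ← hnorm, Finset.sum_mul, ← Finset.sum_sub_distrib]
  exact Finset.sum_congr rfl fun j _ => by ring

theorem rayleigh_le_of_repr_eq_zero [LinearOrder ι] (hlam : Antitone lam)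
    (heig : ∀ j, toEuclideanLin A (b j) = (lam j : ℂ) • b j) {v : EuclideanSpace ℂ (Fin n)}
    (hv : v ≠ 0) {k : ι} (hk : ∀ j < k, b.repr v j = 0) : rayleigh A v ≤ lam k := by
  have : ‖v‖ ^ 2 * (rayleigh A v - lam k) ≤ 0 := by
    rw [← sum_sub_mul_norm_repr_sq heig]
    refine Finset.sum_nonpos fun j _ => ?_
    rcases lt_or_ge j k with hj | hj
    · simp [hk j hj]
    · exact mul_nonpos_of_nonpos_of_nonneg (sub_nonpos.2 (hlam hj)) (sq_nonneg _)
  exact sub_nonpos.1 (nonpos_of_mul_nonpos_right this (by positivity))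

end Spectral

theorem ritzValue_le_eigenvalue {n i : ℕ} {A : Matrix (Fin n) (Fin n) ℂ} {lam : Fin n → ℝ}
    {b : OrthonormalBasis (Fin n) ℂ (EuclideanSpace ℂ (Fin n))} (hlam : Antitone lam)
    (heig : ∀ j, toEuclideanLin A (b j) = (lam j : ℂ) • b j)
    {S : Submodule ℂ (EuclideanSpace ℂ (Fin n))} (hS : finrank ℂ S = i) {k : Fin n}
    (hk : (k : ℕ) < i) : ritzValue A S i ≤ lam k := by
  obtain ⟨v, hvS, hv0, hv⟩ := b.exists_mem_ne_zero_repr_eq_zero (S := S) (s := Finset.Iio k)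
    (by simpa [hS] using hk)
  exact (ritzValue_le_rayleigh hS hvS hv0).trans
    (rayleigh_le_of_repr_eq_zero hlam heig hv0 fun j hj => hv j (Finset.mem_Iio.2 hj))

section Reweighting

variable {ι : Type*} [Fintype ι] {l g w : ι → ℝ} {μ ν' F ν : ℝ}

theorem sq_mul_sum_le_sum_reweighted (hνF : ν ^ 2 ≤ F ^ 2) (hνμ : ν' ≤ μ) (hw : ∀ j, 0 ≤ w j)
    (hg : ∀ j, μ ≤ l j ∧ F ^ 2 ≤ g j ∨ l j ≤ ν' ∧ g j ≤ ν ^ 2) :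
    F ^ 2 * ∑ j, (l j - ν') * w j ≤ ∑ j, (l j - ν') * (g j * w j) := by
  rw [Finset.mul_sum]
  refine Finset.sum_le_sum fun j _ => ?_
  have : 0 ≤ (l j - ν') * (g j - F ^ 2) := by
    rcases hg j with ⟨hl, hgj⟩ | ⟨hl, hgj⟩
    · exact mul_nonneg (by linarith) (by linarith)
    · exact mul_nonneg_of_nonpos_of_nonpos (by linarith) (by linarith)
  linear_combination (mul_nonneg this (hw j))

theorem sum_reweighted_nonneg {K : ℝ} (hK : 0 ≤ K) (hνF : ν ^ 2 ≤ F ^ 2) (hνμ : ν' ≤ μ)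
    (hw : ∀ j, 0 ≤ w j) (hg : ∀ j, μ ≤ l j ∧ F ^ 2 ≤ g j ∨ l j ≤ ν' ∧ g j ≤ ν ^ 2)
    (h : 0 ≤ ∑ j, (l j - μ) * w j + K * ∑ j, (l j - ν') * w j) :
    0 ≤ ∑ j, (l j - μ) * (g j * w j) + ν ^ 2 / F ^ 2 * K * ∑ j, (l j - ν') * (g j * w j) := by
  have hc : ν ^ 2 / F ^ 2 * F ^ 2 = ν ^ 2 := by
    rcases eq_or_ne F 0 with rfl | hF
    · simp [le_antisymm (by simpa using hνF) (sq_nonneg ν)]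
    · exact div_mul_cancel₀ _ (by positivity)
  have hterm : ∀ j, ν ^ 2 * ((l j - μ) * w j + K * ((l j - ν') * w j)) ≤
      (l j - μ) * (g j * w j) + ν ^ 2 / F ^ 2 * K * ((l j - ν') * (g j * w j)) := by
    intro j
    have hcK : 0 ≤ ν ^ 2 / F ^ 2 * K := by positivity
    -- each product has factors of equal sign: all `≥ 0` above the gap, all `≤ 0` below it
    have : 0 ≤ (l j - μ) * (g j - ν ^ 2) + ν ^ 2 / F ^ 2 * K * ((l j - ν') * (g j - F ^ 2)) := by
      rcases hg j with ⟨hl, hgj⟩ | ⟨hl, hgj⟩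
      · exact add_nonneg (mul_nonneg (by linarith) (by linarith))
          (mul_nonneg hcK (mul_nonneg (by linarith) (by linarith)))
      · exact add_nonneg (mul_nonneg_of_nonpos_of_nonpos (by linarith) (by linarith))
          (mul_nonneg hcK (mul_nonneg_of_nonpos_of_nonpos (by linarith) (by linarith)))
    linear_combination mul_nonneg this (hw j) - K * (l j - ν') * w j * hc
  calc 0 ≤ ν ^ 2 * (∑ j, (l j - μ) * w j + K * ∑ j, (l j - ν') * w j) := by positivity
    _ = ∑ j, ν ^ 2 * ((l j - μ) * w j + K * ((l j - ν') * w j)) := by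
      rw [Finset.mul_sum _ _ K, ← Finset.sum_add_distrib, Finset.mul_sum]
    _ ≤ _ := Finset.sum_le_sum fun j _ => hterm j
    _ = _ := by rw [Finset.mul_sum _ _ (ν ^ 2 / F ^ 2 * K), Finset.sum_add_distrib]

end Reweighting

theorem div_le_iff_nonneg_sub_add_mul_sub {μ ν' L t : ℝ} (hL : 0 ≤ L) :
    (μ + L * ν') / (1 + L) ≤ t ↔ 0 ≤ t - μ + L * (t - ν') := by
  rw [div_le_iff₀ (by linarith)]
  constructor <;> intro h <;> linarith

theorem lt_and_div_le_of_nonneg_sub_add_mul_sub {μ ν' L t : ℝ} (hL : 0 ≤ L) (hνμ : ν' < μ)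
    (h : 0 ≤ t - μ + L * (t - ν')) : ν' < t ∧ (μ - t) / (t - ν') ≤ L := by
  have ht : ν' < t := by nlinarith
  exact ⟨ht, (div_le_iff₀ (sub_pos.2 ht)).2 (by linarith)⟩

theorem Submodule.finrank_map_of_ne_zero {K V W : Type*} [DivisionRing K] [AddCommGroup V]
    [Module K V] [AddCommGroup W] [Module K W] (f : V →ₗ[K] W) {S : Submodule K V}
    [FiniteDimensional K S] (hf : ∀ v ∈ S, v ≠ 0 → f v ≠ 0) :
    finrank K (S.map f) = finrank K S := by
  have hinj : Function.Injective (f ∘ₗ S.subtype) := by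
    rw [← LinearMap.ker_eq_bot, Submodule.eq_bot_iff]
    rintro ⟨v, hv⟩ hker
    by_contra hne
    exact hf v hv (by simpa using hne) hker
  rw [← LinearMap.finrank_range_of_inj hinj, LinearMap.range_comp, Submodule.range_subtype]

theorem Orthonormal.matFun_apply {n : ℕ} {x : Fin n → EuclideanSpace ℂ (Fin n)}
    (hx : Orthonormal ℂ x) (lam : Fin n → ℝ) (f : ℝ → ℝ) (i : Fin n) :
    matFun lam x f (x i) = (f (lam i) : ℂ) • x i := by
  classical
  simp [matFun, LinearMap.sum_apply, orthonormal_iff_ite.1 hx]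

theorem rayleigh_matFun_of_gap {n : ℕ} {A : Matrix (Fin n) (Fin n) ℂ} {lam : Fin n → ℝ}
    {b : OrthonormalBasis (Fin n) ℂ (EuclideanSpace ℂ (Fin n))}
    (heig : ∀ j, toEuclideanLin A (b j) = (lam j : ℂ) • b j) {f : ℝ → ℝ} {μ ν' K F ν : ℝ}
    (hK : 0 ≤ K) (hF : 0 < F) (hνF : ν ^ 2 ≤ F ^ 2) (hνμ : ν' ≤ μ)
    (hf : ∀ j, μ ≤ lam j ∧ F ^ 2 ≤ f (lam j) ^ 2 ∨ lam j ≤ ν' ∧ f (lam j) ^ 2 ≤ ν ^ 2)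
    {v : EuclideanSpace ℂ (Fin n)} (hv0 : v ≠ 0) (hv : ν' < rayleigh A v)
    (hvK : 0 ≤ rayleigh A v - μ + K * (rayleigh A v - ν')) :
    matFun lam b f v ≠ 0 ∧ 0 ≤ rayleigh A (matFun lam b f v) - μ +
      ν ^ 2 / F ^ 2 * K * (rayleigh A (matFun lam b f v) - ν') := by
  set z := matFun lam b f v
  have hw : ∀ j, ‖b.repr z j‖ ^ 2 = f (lam j) ^ 2 * ‖b.repr v j‖ ^ 2 := fun j => by
    rw [b.repr_apply_of_apply_eq_smul (b.orthonormal.matFun_apply lam f), norm_mul, mul_pow,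
      Complex.norm_real, Real.norm_eq_abs, sq_abs]
  have hz : z ≠ 0 := by
    have : 0 < ‖z‖ ^ 2 * (rayleigh A z - ν') := by
      rw [← sum_sub_mul_norm_repr_sq heig]
      simp only [hw]
      calc 0 < F ^ 2 * (‖v‖ ^ 2 * (rayleigh A v - ν')) := by
            have := sub_pos.2 hv; positivity
        _ = F ^ 2 * ∑ j, (lam j - ν') * ‖b.repr v j‖ ^ 2 := by
            rw [sum_sub_mul_norm_repr_sq heig]
        _ ≤ _ := sq_mul_sum_le_sum_reweighted hνF hνμ (fun j => sq_nonneg _) hf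
    rintro hz
    simp [hz] at this
  refine ⟨hz, nonneg_of_mul_nonneg_right ?_ (by positivity : 0 < ‖z‖ ^ 2)⟩
  rw [mul_add, mul_left_comm, ← sum_sub_mul_norm_repr_sq heig, ← sum_sub_mul_norm_repr_sq heig]
  simp only [hw]
  refine sum_reweighted_nonneg hK hνF hνμ (fun j => sq_nonneg _) hf ?_
  rw [sum_sub_mul_norm_repr_sq heig, sum_sub_mul_norm_repr_sq heig, mul_left_comm, ← mul_add]
  positivity

theorem eigenvalue_gap_split {n p : ℕ} (hpn : p < n) {lam : Fin n → ℝ} (hlam : Antitone lam)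
    {f : ℝ → ℝ} {νp : ℝ} (hν : 0 ≤ νp)
    (hνp : IsGreatest ((fun j => |f (lam j)|) '' {j : Fin n | p ≤ (j : ℕ)}) νp)
    (hmono : ∀ j k : Fin n, (j : ℕ) ≤ (k : ℕ) → (k : ℕ) < p → |f (lam k)| ≤ |f (lam j)|)
    (j : Fin n) :
    lam ⟨p - 1, by omega⟩ ≤ lam j ∧ |f (lam ⟨p - 1, by omega⟩)| ^ 2 ≤ f (lam j) ^ 2 ∨
      lam j ≤ lam ⟨p, hpn⟩ ∧ f (lam j) ^ 2 ≤ νp ^ 2 := by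
  rcases lt_or_ge (j : ℕ) p with hj | hj
  · refine .inl ⟨hlam (Fin.le_def.2 (Nat.le_sub_one_of_lt hj)), sq_le_sq.2 ?_⟩
    exact (abs_abs _).trans_le (hmono j _ (Nat.le_sub_one_of_lt hj) (by simp; omega))
  · refine .inr ⟨hlam (Fin.le_def.2 hj), sq_le_sq.2 ?_⟩
    exact (hνp.2 ⟨j, hj, rfl⟩).trans_eq (abs_of_nonneg hν).symm

/-- (Basic angle-free bound.) If `η_p > λ_{p+1}` and
`|f(λ₁)| ≥ ⋯ ≥ |f(λ_p)| > ν_p = max_{j>p} |f(λ_j)|`, then `𝒴' = f(A)𝒴` has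
dimension `p` and its smallest Ritz value `η'_p` satisfies `η'_p > λ_{p+1}` and
`(λ_p − η'_p)/(η'_p − λ_{p+1}) ≤ (ν_p²/|f(λ_p)|²)·(λ_p − η_p)/(η_p − λ_{p+1})`.
(0-indexed: `lam ⟨j⟩` is `λ_{j+1}`.) -/
theorem stmt7 {n p : ℕ} (hp : 0 < p) (hpn : p < n)
    (A : Matrix (Fin n) (Fin n) ℂ)
    (lam : Fin n → ℝ) (hlam : Antitone lam)
    (x : Fin n → EuclideanSpace ℂ (Fin n)) (hx : Orthonormal ℂ x)
    (heig : ∀ j, Matrix.toEuclideanLin A (x j) = (lam j : ℂ) • x j)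
    (Y : Submodule ℂ (EuclideanSpace ℂ (Fin n))) (hY : Module.finrank ℂ Y = p)
    (hηp : lam ⟨p, hpn⟩ < ritzValue A Y p)
    (f : ℝ → ℝ) (νp : ℝ)
    (hνp : IsGreatest ((fun j => |f (lam j)|) '' {j : Fin n | p ≤ (j : ℕ)}) νp)
    (hmono : ∀ j k : Fin n, (j : ℕ) ≤ (k : ℕ) → (k : ℕ) < p →
      |f (lam k)| ≤ |f (lam j)|)
    (hgt : νp < |f (lam ⟨p - 1, by omega⟩)|) :
    Module.finrank ℂ (Y.map (matFun lam x f)) = p ∧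
    lam ⟨p, hpn⟩ < ritzValue A (Y.map (matFun lam x f)) p ∧
    (lam ⟨p - 1, by omega⟩ - ritzValue A (Y.map (matFun lam x f)) p) /
        (ritzValue A (Y.map (matFun lam x f)) p - lam ⟨p, hpn⟩) ≤
      νp ^ 2 / |f (lam ⟨p - 1, by omega⟩)| ^ 2 *
        ((lam ⟨p - 1, by omega⟩ - ritzValue A Y p) /
          (ritzValue A Y p - lam ⟨p, hpn⟩)) := by
  obtain ⟨b, rfl⟩ : ∃ b : OrthonormalBasis (Fin n) ℂ (EuclideanSpace ℂ (Fin n)), ⇑b = x :=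
    ⟨.mk hx (hx.linearIndependent.span_eq_top_of_card_eq_finrank' (by simp)).ge, by simp⟩
  set μ := lam ⟨p - 1, by omega⟩
  set ν' := lam ⟨p, hpn⟩
  set F := |f μ|
  set η := ritzValue A Y p
  set K := (μ - η) / (η - ν')
  set L := νp ^ 2 / F ^ 2 * K
  have hημ : η ≤ μ := ritzValue_le_eigenvalue hlam heig hY (by simp; omega)
  have hK : 0 ≤ K := div_nonneg (by linarith) (by linarith)
  have hKη : K * (η - ν') = μ - η := div_mul_cancel₀ _ (sub_pos.2 hηp).ne'
  have hν : 0 ≤ νp := by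
    obtain ⟨j, -, hj⟩ := hνp.1
    exact hj ▸ abs_nonneg _
  have hL : 0 ≤ L := by positivity
  have himage : ∀ y ∈ Y, y ≠ 0 → matFun lam b f y ≠ 0 ∧
      0 ≤ rayleigh A (matFun lam b f y) - μ + L * (rayleigh A (matFun lam b f y) - ν') := by
    intro y hy hy0
    have hηy : η ≤ rayleigh A y := ritzValue_le_rayleigh hY hy hy0
    refine rayleigh_matFun_of_gap heig hK (hν.trans_lt hgt) (by gcongr) (hηp.le.trans hημ)
      (eigenvalue_gap_split hpn hlam hν hνp hmono) hy0 (hηp.trans_le hηy) ?_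
    nlinarith [mul_le_mul_of_nonneg_left hηy hK]
  have hfin : finrank ℂ (Y.map (matFun lam b f)) = p :=
    (Submodule.finrank_map_of_ne_zero _ fun y hy hy0 => (himage y hy hy0).1).trans hY
  -- `(μ + L * ν') / (1 + L)` is the `t` with `(μ - t) / (t - ν') = L`
  have hη' : (μ + L * ν') / (1 + L) ≤ ritzValue A (Y.map (matFun lam b f)) p := by
    refine le_ritzValue hp hfin ?_
    rintro _ ⟨y, hy, rfl⟩ hy0
    exact (div_le_iff_nonneg_sub_add_mul_sub hL).2 (himage y hy (by rintro rfl; simp at hy0)).2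
  exact ⟨hfin, lt_and_div_le_of_nonneg_sub_add_mul_sub hL (hηp.trans_le hημ)
    ((div_le_iff_nonneg_sub_add_mul_sub hL).1 hη')⟩
end
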